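/- Let R be a commutative ring, p a prime invertible in R, and u ∈ R*. In the R-algebra S = R[T]/(T^p − u), the class α of T is invertible, 1, α, …, α^{p-1} is an R-module basis of S, and for a p-cyclic group G acting via g(α) = χ(g)α for a character χ : G → μ_p ⊆ R*, the χ-eigenspace S^χ = {s ∈ S : g(s) = χ(g)s for all g} is the free R-module generated by α. -/

import Mathlib

/-!
An algebra endomorphism `σ` with `σ α = c • α` acts diagonally on the basis `1, α, …, α^{p-1}`,
scaling the `j`-th coordinate by `c ^ j`. For `σ = ρ g` with `g` a generator of `G` we have
`c = χ g`, and `c ^ j - c` is a unit for every `j ≠ 1`: it is `-(c - 1)` for `j = 0` and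
`c * (χ (g ^ (j - 1)) - 1)` otherwise, where `g ^ (j - 1) ≠ 1`. Hence a `χ`-eigenvector has every
coordinate except that of `α` equal to zero.
-/

open Polynomial

namespace AdjoinRoot

variable {R : Type*} [CommRing R]

theorem root_X_pow_sub_C_pow (n : ℕ) (a : R) : root (X ^ n - C a) ^ n = of (X ^ n - C a) a := by
  have h := eval₂_root (X ^ n - C a)
  rwa [eval₂_sub, eval₂_pow, eval₂_X, eval₂_C, sub_eq_zero] at h

theorem isUnit_root_X_pow_sub_C {n : ℕ} (hn : n ≠ 0) {a : R} (ha : IsUnit a) :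
    IsUnit (root (X ^ n - C a)) :=
  (isUnit_pow_iff hn).mp (root_X_pow_sub_C_pow n a ▸ ha.map _)

noncomputable def basisXPowSubC [Nontrivial R] {n : ℕ} (hn : n ≠ 0) (a : R) :
    Module.Basis (Fin n) R (AdjoinRoot (X ^ n - C a)) :=
  (powerBasis' (monic_X_pow_sub_C a hn)).basis.reindex (finCongr natDegree_X_pow_sub_C)

theorem basisXPowSubC_apply [Nontrivial R] {n : ℕ} (hn : n ≠ 0) (a : R) (i : Fin n) :
    basisXPowSubC hn a i = root (X ^ n - C a) ^ (i : ℕ) := by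
  simp only [basisXPowSubC, Module.Basis.reindex_apply, PowerBasis.basis_eq_pow]
  rfl

end AdjoinRoot

namespace Module.Basis

variable {R S : Type*} {n : ℕ} {α : S}

theorem repr_map_eq_pow_mul_of_map_gen_eq_smul [CommSemiring R] [Semiring S] [Algebra R S]
    (b : Basis (Fin n) R S) (hb : ∀ i, b i = α ^ (i : ℕ)) (σ : S →ₐ[R] S) {c : R}
    (hσ : σ α = c • α) (s : S) (j : Fin n) :
    b.repr (σ s) j = c ^ (j : ℕ) * b.repr s j := by
  have hσb : ∀ i, σ (b i) = c ^ (i : ℕ) • b i := fun i => by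
    rw [hb, map_pow, hσ, _root_.smul_pow]
  conv_lhs => rw [← b.sum_repr s]
  rw [map_sum]
  simp_rw [map_smul, hσb, smul_smul]
  rw [b.repr_sum_self]
  exact mul_comm _ _

theorem exists_eq_smul_gen_of_map_eq_smul [CommRing R] [Ring S] [Algebra R S]
    (b : Basis (Fin n) R S) (hb : ∀ i, b i = α ^ (i : ℕ)) (hn : 1 < n) (σ : S →ₐ[R] S) {c : R}
    (hσ : σ α = c • α) (hc : ∀ j : Fin n, (j : ℕ) ≠ 1 → IsUnit (c ^ (j : ℕ) - c))
    {s : S} (hs : σ s = c • s) : ∃ r : R, s = r • α := by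
  have hcoord : ∀ j : Fin n, j ≠ ⟨1, hn⟩ → b.repr s j = 0 := fun j hj => by
    have hj' : (j : ℕ) ≠ 1 := fun h => hj (Fin.ext h)
    have hrepr := b.repr_map_eq_pow_mul_of_map_gen_eq_smul hb σ hσ s j
    rw [hs, map_smul, Finsupp.smul_apply, smul_eq_mul] at hrepr
    exact (hc j hj').mul_right_eq_zero.mp (by rw [sub_mul, hrepr, sub_self])
  refine ⟨b.repr s ⟨1, hn⟩, ?_⟩
  conv_lhs => rw [← b.sum_repr s]
  rw [Finset.sum_eq_single_of_mem _ (Finset.mem_univ _)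
    fun j _ hj => by rw [hcoord j hj, zero_smul], hb, pow_one]

end Module.Basis

theorem MonoidHom.isUnit_pow_sub_self {G R : Type*} [Group G] [CommRing R] (χ : G →* Rˣ)
    (hχ : ∀ g : G, g ≠ 1 → IsUnit ((χ g : R) - 1)) {g : G} (hg : g ≠ 1) {j : ℕ}
    (hj : j < orderOf g) (hj1 : j ≠ 1) : IsUnit ((χ g : R) ^ j - χ g) := by
  cases j with
  | zero => simpa [neg_sub] using (hχ g hg).neg
  | succ k =>
    have hk : g ^ k ≠ 1 := pow_ne_one_of_lt_orderOf (by omega) (by omega)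
    have hfactor : (χ g : R) ^ (k + 1) - χ g = χ g * ((χ (g ^ k) : R) - 1) := by
      rw [map_pow, Units.val_pow_eq_pow_val]; ring
    rw [hfactor]
    exact (χ g).isUnit.mul (hχ _ hk)

theorem stmt_12_general (p : ℕ) (hp : p.Prime) (R : Type) [CommRing R]
    (u : Rˣ) (G : Type) [Group G] (hG : Nat.card G = p)
    (χ : G →* Rˣ) (hχ : Function.Injective χ)
    (hprim : ∀ g : G, g ≠ 1 → IsUnit ((χ g : R) - 1))
    (ρ : G →* (AdjoinRoot (Polynomial.X ^ p - Polynomial.C (u : R)) ≃ₐ[R]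
          AdjoinRoot (Polynomial.X ^ p - Polynomial.C (u : R))))
    (hρ : ∀ g : G, ρ g (AdjoinRoot.root (Polynomial.X ^ p - Polynomial.C (u : R)))
          = (χ g : R) • AdjoinRoot.root (Polynomial.X ^ p - Polynomial.C (u : R))) :
    IsUnit (AdjoinRoot.root (Polynomial.X ^ p - Polynomial.C (u : R))) ∧
    (∃ b : Module.Basis (Fin p) R (AdjoinRoot (Polynomial.X ^ p - Polynomial.C (u : R))),
      ∀ i : Fin p, b i = AdjoinRoot.root (Polynomial.X ^ p - Polynomial.C (u : R)) ^ (i : ℕ)) ∧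
    {s : AdjoinRoot (Polynomial.X ^ p - Polynomial.C (u : R)) |
        ∀ g : G, ρ g s = (χ g : R) • s}
      = {s : AdjoinRoot (Polynomial.X ^ p - Polynomial.C (u : R)) |
        ∃ r : R, s = r • AdjoinRoot.root (Polynomial.X ^ p - Polynomial.C (u : R))} := by
  have := Fact.mk hp
  have : Finite G := Nat.finite_of_card_ne_zero (hG ▸ hp.ne_zero)
  obtain ⟨g, hg⟩ := exists_prime_orderOf_dvd_card' (G := G) p (hG ▸ dvd_rfl)
  have hg1 : g ≠ 1 := fun h => hp.one_lt.ne' (by rw [← hg, h, orderOf_one])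
  have : Nontrivial Rˣ := ⟨⟨χ g, 1, fun h => hg1 (hχ (h.trans χ.map_one.symm))⟩⟩
  have : Nontrivial R := Units.val_injective.nontrivial
  let b := AdjoinRoot.basisXPowSubC hp.ne_zero (u : R)
  have hb := AdjoinRoot.basisXPowSubC_apply hp.ne_zero (u : R)
  refine ⟨AdjoinRoot.isUnit_root_X_pow_sub_C hp.ne_zero u.isUnit, ⟨b, hb⟩, ?_⟩
  ext s
  refine ⟨fun hs => ?_, ?_⟩
  · exact b.exists_eq_smul_gen_of_map_eq_smul hb hp.one_lt (ρ g).toAlgHom (hρ g)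
      (fun j hj => χ.isUnit_pow_sub_self hprim hg1 (hg ▸ j.isLt) hj) (hs g)
  · rintro ⟨r, rfl⟩ h
    rw [map_smul, hρ h, smul_comm]

/-- In `S = R[T]/(T^p − u)` with `p` prime invertible in `R` and `u ∈ Rˣ`, the class `α` of `T`
is invertible, the powers `1, α, …, α^{p-1}` form an `R`-module basis of `S`, and for a
`p`-cyclic group `G` acting via a nontrivial character `χ : G → μ_p ⊆ Rˣ` by `g(α) = χ(g)α`,
the `χ`-eigenspace `S^χ` is the free `R`-module generated by `α`. -/
theorem stmt_12 (p : ℕ) (hp : p.Prime) (R : Type) [CommRing R] (hinv : IsUnit (p : R))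
    (u : Rˣ) (G : Type) [Group G] (hG : Nat.card G = p)
    (χ : G →* Rˣ) (hχ : Function.Injective χ)
    (hroots : ∀ g : G, (χ g) ^ p = 1)
    (hprim : ∀ g : G, g ≠ 1 → IsUnit ((χ g : R) - 1))
    (ρ : G →* (AdjoinRoot (Polynomial.X ^ p - Polynomial.C (u : R)) ≃ₐ[R]
          AdjoinRoot (Polynomial.X ^ p - Polynomial.C (u : R))))
    (hρ : ∀ g : G, ρ g (AdjoinRoot.root (Polynomial.X ^ p - Polynomial.C (u : R)))
          = (χ g : R) • AdjoinRoot.root (Polynomial.X ^ p - Polynomial.C (u : R))) :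
    IsUnit (AdjoinRoot.root (Polynomial.X ^ p - Polynomial.C (u : R))) ∧
    (∃ b : Module.Basis (Fin p) R (AdjoinRoot (Polynomial.X ^ p - Polynomial.C (u : R))),
      ∀ i : Fin p, b i = AdjoinRoot.root (Polynomial.X ^ p - Polynomial.C (u : R)) ^ (i : ℕ)) ∧
    {s : AdjoinRoot (Polynomial.X ^ p - Polynomial.C (u : R)) |
        ∀ g : G, ρ g s = (χ g : R) • s}
      = {s : AdjoinRoot (Polynomial.X ^ p - Polynomial.C (u : R)) |
        ∃ r : R, s = r • AdjoinRoot.root (Polynomial.X ^ p - Polynomial.C (u : R))} :=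
  stmt_12_general p hp R u G hG χ hχ hprim ρ hρ
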